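/- Let P ⊆ ℝⁿ be a discrete point set with conv(P) = ℝⁿ. Then every Voronoi cell of P is a polytope. -/

import Mathlib

open scoped RealInnerProductSpace
open Set

noncomputable section

abbrev E (n : ℕ) := EuclideanSpace ℝ (Fin n)

/-- `P` is discrete: every bounded set contains only finitely many points of `P`. -/
def IsDiscretePointSet {n : ℕ} (P : Set (E n)) : Prop :=
  ∀ B : Set (E n), Bornology.IsBounded B → (P ∩ B).Finite

/-- The Voronoi cell of `p` relative to `P`. -/
def voronoiCell {n : ℕ} (P : Set (E n)) (p : E n) : Set (E n) :=
  {x | ∀ q ∈ P, dist x p ≤ dist x q}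

/-- A polyhedron: a finite intersection of closed half-spaces. -/
def IsPolyhedron {n : ℕ} (S : Set (E n)) : Prop :=
  ∃ (k : ℕ) (y : Fin k → E n) (α : Fin k → ℝ),
    S = ⋂ i, {x : E n | (inner ℝ x (y i) : ℝ) ≤ α i}

/-- A polytope: a bounded polyhedron. -/
def IsPolytope {n : ℕ} (S : Set (E n)) : Prop :=
  IsPolyhedron S ∧ Bornology.IsBounded S

/-- The half-space of points at least as close to `p` as to `q`. -/
def halfSpace {n : ℕ} (p q : E n) : Set (E n) :=
  {x : E n | (inner ℝ (x - p) (q - p) : ℝ) ≤ (1/2) * ‖q - p‖^2}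

/-- The conic hull: all nonnegative combinations of finitely many elements of `M`. -/
def coneHull {n : ℕ} (M : Set (E n)) : Set (E n) :=
  {x | ∃ (k : ℕ) (v : Fin k → E n) (c : Fin k → ℝ),
    (∀ i, v i ∈ M) ∧ (∀ i, 0 ≤ c i) ∧ x = ∑ i, c i • v i}

/-- The direction cone of `p`: the conic hull of `P - p`. -/
def dirCone {n : ℕ} (P : Set (E n)) (p : E n) : Set (E n) :=
  coneHull ((fun q => q - p) '' P)

/-- A cone is finitely generated if it is the conic hull of finitely many vectors. -/
def FinitelyGeneratedCone {n : ℕ} (C : Set (E n)) : Prop :=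
  ∃ (k : ℕ) (v : Fin k → E n), C = coneHull (Set.range v)

/-- `q` is Voronoi relevant for `p`: dropping `halfSpace p q` strictly enlarges the
intersection defining the Voronoi cell. -/
def VoronoiRelevant {n : ℕ} (P : Set (E n)) (p q : E n) : Prop :=
  (⋂ r ∈ P \ {p}, halfSpace p r) ⊂ ⋂ r ∈ P \ {p, q}, halfSpace p r

/-!
Since `conv P` is the whole space, every direction `u` has a point `q ∈ P` with
`⟪u, q - p⟫ > 0`; compactness of the unit sphere makes finitely many such `q` suffice, with a
uniform margin, and the bisector half-spaces of those finitely many points already confine the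
cell to a ball `B(p, R)`. Once the cell is bounded, only the finitely many points of `P` in
`B(p, 2r)` (any `r > R`) matter: their half-spaces cut out a convex set containing `p`, which
cannot reach distance `r` from `p` without meeting the cell there, and within distance `r`
every farther point of `P` is irrelevant by the triangle inequality.
-/

section InnerProductSpace

variable {V : Type*} [NormedAddCommGroup V] [InnerProductSpace ℝ V]

lemma exists_mem_inner_sub_pos_of_convexHull_eq_univ {P : Set V}
    (hconv : convexHull ℝ P = univ) (p : V) {u : V} (hu : u ≠ 0) :
    ∃ q ∈ P, 0 < ⟪u, q - p⟫ := by
  by_contra! h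
  have hP : P ⊆ {z | ⟪u, z⟫ ≤ ⟪u, p⟫} := fun q hq => by
    simpa [inner_sub_right] using h q hq
  have hconvex : Convex ℝ {z | ⟪u, z⟫ ≤ ⟪u, p⟫} :=
    convex_halfSpace_le ⟨inner_add_right u, fun c z => real_inner_smul_right u z c⟩ _
  have hpu : p + u ∈ {z | ⟪u, z⟫ ≤ ⟪u, p⟫} :=
    convexHull_min hP hconvex (hconv ▸ mem_univ (p + u))
  simp only [mem_ofPred_eq, inner_add_right, real_inner_self_eq_norm_sq] at hpu
  have : 0 < ‖u‖ ^ 2 := by positivity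
  linarith

/-- Compactness of the unit sphere: the cones `‖u‖ < (m + 1) ⟪u, s⟫` cover it. -/
lemma exists_finite_forall_norm_le_mul_inner [ProperSpace V] {S : Set V}
    (hS : ∀ u ≠ 0, ∃ s ∈ S, 0 < ⟪u, s⟫) :
    ∃ F ⊆ S, F.Finite ∧ ∃ C : ℝ, 0 ≤ C ∧ ∀ u ≠ 0, ∃ s ∈ F, ‖u‖ ≤ C * ⟪u, s⟫ := by
  let U : S × ℕ → Set V := fun z => {u | ‖u‖ < (z.2 + 1) * ⟪u, (z.1 : V)⟫}
  have hU_open : ∀ z, IsOpen (U z) := fun z =>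
    isOpen_lt continuous_norm (continuous_const.mul (continuous_id.inner continuous_const))
  have hU_cover : Metric.sphere (0 : V) 1 ⊆ ⋃ z, U z := by
    intro u hu
    have hu0 : u ≠ 0 := ne_zero_of_mem_unit_sphere ⟨u, hu⟩
    obtain ⟨s, hsS, hs⟩ := hS u hu0
    obtain ⟨m, hm⟩ := exists_nat_gt (⟪u, s⟫)⁻¹
    refine mem_iUnion.2 ⟨(⟨s, hsS⟩, m), ?_⟩
    have hm' : 1 < (m + 1) * ⟪u, s⟫ := by
      rw [inv_lt_iff_one_lt_mul₀ hs] at hm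
      nlinarith
    simpa [U, mem_sphere_zero_iff_norm.1 hu] using hm'
  obtain ⟨t, ht⟩ := (isCompact_sphere (0 : V) 1).elim_finite_subcover U hU_open hU_cover
  refine ⟨(fun z : S × ℕ => (z.1 : V)) '' t, ?_, t.finite_toSet.image _, t.sup Prod.snd + 1,
    by positivity, ?_⟩
  · rintro _ ⟨⟨⟨s, hs⟩, m⟩, -, rfl⟩
    exact hs
  intro u hu
  have hnorm : 0 < ‖u‖ := norm_pos_iff.2 hu
  have hv : ‖u‖⁻¹ • u ∈ Metric.sphere (0 : V) 1 := by
    simp [norm_smul, inv_mul_cancel₀ hnorm.ne']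
  obtain ⟨z, hzt, hz⟩ := mem_iUnion₂.1 (ht hv)
  refine ⟨z.1, ⟨z, hzt, rfl⟩, ?_⟩
  have hz' : ‖u‖ < (z.2 + 1) * ⟪u, (z.1 : V)⟫ := by
    simp only [U, mem_ofPred_eq, norm_smul, norm_inv, norm_norm, inv_mul_cancel₀ hnorm.ne',
      real_inner_smul_left] at hz
    rw [mul_left_comm, lt_inv_mul_iff₀ hnorm] at hz
    simpa using hz
  have hle : (z.2 : ℝ) ≤ (t.sup Prod.snd : ℕ) := by exact_mod_cast Finset.le_sup hzt
  have hpos : 0 < ⟪u, (z.1 : V)⟫ := by nlinarith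
  nlinarith

end InnerProductSpace

section Voronoi

variable {n : ℕ}

lemma mem_halfSpace_iff {p q x : E n} : x ∈ halfSpace p q ↔ dist x p ≤ dist x q := by
  have hexpand : ‖x - q‖ ^ 2 = ‖x - p‖ ^ 2 - 2 * ⟪x - p, q - p⟫ + ‖q - p‖ ^ 2 := by
    rw [show x - q = (x - p) - (q - p) by abel]
    exact norm_sub_sq_real _ _
  rw [dist_eq_norm, dist_eq_norm, ← sq_le_sq₀ (norm_nonneg _) (norm_nonneg _), hexpand,
    halfSpace, mem_ofPred_eq]
  constructor <;> intro h <;> linarith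

lemma halfSpace_eq_setOf_inner_le (p q : E n) :
    halfSpace p q = {x | ⟪x, q - p⟫ ≤ 1 / 2 * ‖q - p‖ ^ 2 + ⟪p, q - p⟫} := by
  ext x
  simp only [halfSpace, mem_ofPred_eq, inner_sub_left]
  constructor <;> intro h <;> linarith

lemma convex_halfSpace (p q : E n) : Convex ℝ (halfSpace p q) := by
  rw [halfSpace_eq_setOf_inner_le]
  exact convex_halfSpace_le ⟨fun x y => inner_add_left x y _,
    fun c x => real_inner_smul_left x _ c⟩ _

lemma self_mem_halfSpace (p q : E n) : p ∈ halfSpace p q :=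
  mem_halfSpace_iff.2 (by simp)

lemma self_mem_voronoiCell (P : Set (E n)) (p : E n) : p ∈ voronoiCell P p :=
  fun q _ => by simp

lemma voronoiCell_eq_biInter_halfSpace (P : Set (E n)) (p : E n) :
    voronoiCell P p = ⋂ q ∈ P, halfSpace p q := by
  ext x
  simp [voronoiCell, mem_halfSpace_iff]

lemma isPolyhedron_iInter_setOf_inner_le {ι : Type*} [Finite ι] (y : ι → E n) (α : ι → ℝ) :
    IsPolyhedron (⋂ i, {x : E n | ⟪x, y i⟫ ≤ α i}) := by
  let e := (Finite.equivFin ι).symm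
  exact ⟨_, y ∘ e, α ∘ e, (e.surjective.iInter_comp fun i => {x : E n | ⟪x, y i⟫ ≤ α i}).symm⟩

lemma isPolyhedron_biInter_halfSpace (p : E n) {G : Set (E n)} (hG : G.Finite) :
    IsPolyhedron (⋂ q ∈ G, halfSpace p q) := by
  have : Finite G := hG
  simp_rw [biInter_eq_iInter, halfSpace_eq_setOf_inner_le]
  exact isPolyhedron_iInter_setOf_inner_le _ _

lemma isBounded_voronoiCell {P : Set (E n)} (hconv : convexHull ℝ P = univ) (p : E n) :
    Bornology.IsBounded (voronoiCell P p) := by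
  obtain ⟨F, hFP, hF, C, hC0, hC⟩ := exists_finite_forall_norm_le_mul_inner
    (S := (· - p) '' P) fun u hu => by
      simpa using exists_mem_inner_sub_pos_of_convexHull_eq_univ hconv p hu
  obtain ⟨B, hB⟩ := (hF.image fun s => C * (1 / 2 * ‖s‖ ^ 2)).bddAbove
  refine (Metric.isBounded_closedBall (x := p) (r := max B 0)).subset fun x hx => ?_
  rw [Metric.mem_closedBall, dist_eq_norm]
  rcases eq_or_ne (x - p) 0 with hxp | hxp
  · simp [hxp]
  obtain ⟨s, hsF, hs⟩ := hC _ hxp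
  obtain ⟨q, hqP, rfl⟩ := hFP hsF
  have hinner : ⟪x - p, q - p⟫ ≤ 1 / 2 * ‖q - p‖ ^ 2 := mem_halfSpace_iff.2 (hx q hqP)
  calc ‖x - p‖ ≤ C * ⟪x - p, q - p⟫ := hs
    _ ≤ C * (1 / 2 * ‖q - p‖ ^ 2) := mul_le_mul_of_nonneg_left hinner hC0
    _ ≤ B := hB ⟨q - p, hsF, rfl⟩
    _ ≤ max B 0 := le_max_left _ _

lemma mem_voronoiCell_of_mem_biInter_halfSpace {P : Set (E n)} {p x : E n} {r : ℝ}
    (hxr : dist x p ≤ r) (hx : x ∈ ⋂ q ∈ P ∩ Metric.closedBall p (2 * r), halfSpace p q) :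
    x ∈ voronoiCell P p := by
  intro q hq
  by_cases hqr : dist q p ≤ 2 * r
  · exact mem_halfSpace_iff.1 (mem_iInter₂.1 hx q ⟨hq, hqr⟩)
  · linarith [dist_triangle_left q p x]

lemma voronoiCell_eq_biInter_halfSpace_inter_closedBall {P : Set (E n)} {p : E n} {R r : ℝ}
    (hR : voronoiCell P p ⊆ Metric.closedBall p R) (hRr : R < r) :
    voronoiCell P p = ⋂ q ∈ P ∩ Metric.closedBall p (2 * r), halfSpace p q := by
  set K := ⋂ q ∈ P ∩ Metric.closedBall p (2 * r), halfSpace p q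
  refine Subset.antisymm ?_ fun x hx => ?_
  · rw [voronoiCell_eq_biInter_halfSpace]
    exact biInter_subset_biInter_left inter_subset_left
  have hK : Convex ℝ K := convex_iInter₂ fun q _ => convex_halfSpace p q
  have hpK : p ∈ K := mem_iInter₂.2 fun q _ => self_mem_halfSpace p q
  suffices hxr : dist x p ≤ r from mem_voronoiCell_of_mem_biInter_halfSpace hxr hx
  by_contra! hxr
  have hr : 0 ≤ r := by
    have hpR := Metric.mem_closedBall.1 (hR (self_mem_voronoiCell P p))
    linarith [dist_self p]
  have ht : r / dist x p ∈ Icc (0 : ℝ) 1 :=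
    ⟨by positivity, (div_le_one (hr.trans_lt hxr)).2 hxr.le⟩
  set y := AffineMap.lineMap p x (r / dist x p)
  have hyr : dist y p = r := by
    rw [dist_lineMap_left, Real.norm_of_nonneg ht.1, dist_comm p x,
      div_mul_cancel₀ _ (hr.trans_lt hxr).ne']
  have hy := hR (mem_voronoiCell_of_mem_biInter_halfSpace hyr.le (hK.lineMap_mem hpK hx ht))
  linarith [Metric.mem_closedBall.1 hy]

end Voronoi

theorem stmt7 {n : ℕ} (P : Set (E n)) (hP : IsDiscretePointSet P)
    (hconv : convexHull ℝ P = Set.univ) :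
    ∀ p ∈ P, IsPolytope (voronoiCell P p) := by
  intro p _
  obtain ⟨R, hR⟩ := (isBounded_voronoiCell hconv p).subset_closedBall p
  refine ⟨?_, isBounded_voronoiCell hconv p⟩
  rw [voronoiCell_eq_biInter_halfSpace_inter_closedBall hR (lt_add_one R)]
  exact isPolyhedron_biInter_halfSpace p (hP _ Metric.isBounded_closedBall)
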